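/- For the n-player parity game with query set M = X^{⊗n}·⟨Z_1Z_2, …, Z_{n−1}Z_n⟩ on the GHZ state with n odd, the classical value equals 1/2 + 2^{−(n+1)/2}. Equivalently, the first-order nonlinearity of the quadratic Boolean function c'(x_2,…,x_n) = Σ_{j=2}^{n−1} x_j x_{j+1} + Σ_{j=2}^{n} x_j over F_2^{n−1} equals 2^{n−2} − 2^{(n−3)/2}, for odd n ≥ 3. -/

import Mathlib

/-- First-order nonlinearity: the minimum Hamming distance from `f`
to an affine Boolean function `x ↦ u·x ⊕ v`. -/
noncomputable def nlAffine {r : ℕ} (f : (Fin r → ZMod 2) → ZMod 2) : ℕ :=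
  sInf {k | ∃ (u : Fin r → ZMod 2) (v : ZMod 2),
    k = hammingDist (fun x => (∑ i, u i * x i) + v) f}

namespace Stmt17aux

/-- the character `(-1)^a` on `ZMod 2`, valued in `ℤ`. -/
def χ : ZMod 2 → ℤ := fun a => if a = 0 then 1 else -1

lemma χ_add (a b : ZMod 2) : χ (a + b) = χ a * χ b := by revert a b; decide
lemma χ_zero : χ 0 = 1 := rfl
lemma χ_pm (a : ZMod 2) : χ a = 1 ∨ χ a = -1 := by revert a; decide

lemma χ_sum {ι : Type*} (s : Finset ι) (f : ι → ZMod 2) :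
    χ (∑ i ∈ s, f i) = ∏ i ∈ s, χ (f i) := by
  classical
  induction s using Finset.cons_induction with
  | empty => simp [χ]
  | cons i s hi ih => rw [Finset.sum_cons, Finset.prod_cons, χ_add, ih]

lemma zmod2_eq_of_add : ∀ x y : ZMod 2, x + y = 0 → x = y := by decide
lemma zmod2_l4 : ∀ x y : ZMod 2, x + y + x + y = 0 := by decide
lemma zmod2_l2 : ∀ x : ZMod 2, x + 0 + x = 0 := by decide

variable {m : ℕ}

def din (i : Fin m) : Fin (2*m) := ⟨2*(i:ℕ), by omega⟩
def din' (i : Fin m) : Fin (2*m) := ⟨2*(i:ℕ)+1, by omega⟩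

def itl (a b : Fin m → ZMod 2) : Fin (2*m) → ZMod 2 :=
  fun j => if h : (j:ℕ) % 2 = 0 then a ⟨(j:ℕ)/2, by omega⟩ else b ⟨(j:ℕ)/2, by omega⟩

lemma itl_din (a b : Fin m → ZMod 2) (i : Fin m) : itl a b (din i) = a i := by
  have h1 : (2*(i:ℕ)) % 2 = 0 := by omega
  have h2 : (2*(i:ℕ)) / 2 = (i:ℕ) := by omega
  simp [itl, din, h1, h2]

lemma itl_din' (a b : Fin m → ZMod 2) (i : Fin m) : itl a b (din' i) = b i := by
  have h1 : (2*(i:ℕ)+1) % 2 = 1 := by omega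
  have h2 : (2*(i:ℕ)+1) / 2 = (i:ℕ) := by omega
  simp [itl, din', h1, h2]

lemma sum_range_two_mul {M : Type*} [AddCommMonoid M] (m : ℕ) (G : ℕ → M) :
    ∑ j ∈ Finset.range (2*m), G j = ∑ i ∈ Finset.range m, (G (2*i) + G (2*i+1)) := by
  induction m with
  | zero => simp
  | succ k ih =>
    have h : 2*(k+1) = (2*k+1)+1 := by ring
    rw [h, Finset.sum_range_succ, Finset.sum_range_succ, ih, Finset.sum_range_succ, add_assoc]

lemma sum_pair {M : Type*} [AddCommMonoid M] (F : Fin (2*m) → M) :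
    ∑ j, F j = ∑ i : Fin m, (F (din i) + F (din' i)) := by
  classical
  let G : ℕ → M := fun j => if h : j < 2*m then F ⟨j, h⟩ else 0
  have h1 : ∑ j, F j = ∑ j ∈ Finset.range (2*m), G j := by
    rw [← Fin.sum_univ_eq_sum_range]
    refine Finset.sum_congr rfl fun j _ => ?_
    simp only [G, dif_pos j.isLt]
  have h2 : ∑ i : Fin m, (F (din i) + F (din' i))
      = ∑ i ∈ Finset.range m, (G (2*i) + G (2*i+1)) := by
    rw [← Fin.sum_univ_eq_sum_range (fun i => G (2*i) + G (2*i+1))]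
    refine Finset.sum_congr rfl fun i _ => ?_
    have hA : 2*(i:ℕ) < 2*m := by omega
    have hB : 2*(i:ℕ)+1 < 2*m := by omega
    simp only [G, dif_pos hA, dif_pos hB, din, din']
  rw [h1, h2, sum_range_two_mul]

def Q (y : Fin (2*m) → ZMod 2) : ZMod 2 :=
  ∑ j : Fin (2*m), ∑ k : Fin (2*m), if (j:ℕ) + 1 = (k:ℕ) then y j * y k else 0

lemma Q_eq (y : Fin (2*m) → ZMod 2) :
    Q y = ∑ j : Fin (2*m),
      (if h : (j:ℕ)+1 < 2*m then y j * y ⟨(j:ℕ)+1, h⟩ else 0) := by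
  unfold Q
  refine Finset.sum_congr rfl fun j _ => ?_
  by_cases h : (j:ℕ)+1 < 2*m
  · rw [dif_pos h]
    have : ∀ k : Fin (2*m), ((j:ℕ)+1 = (k:ℕ)) ↔ (k = ⟨(j:ℕ)+1, h⟩) := by
      intro k; rw [Fin.ext_iff]; exact eq_comm
    calc ∑ k : Fin (2*m), (if (j:ℕ)+1 = (k:ℕ) then y j * y k else 0)
        = ∑ k : Fin (2*m), (if k = ⟨(j:ℕ)+1, h⟩ then y j * y k else 0) :=
          Finset.sum_congr rfl fun k _ => if_congr (this k) rfl rfl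
      _ = y j * y ⟨(j:ℕ)+1, h⟩ := by rw [Finset.sum_ite_eq']; simp
  · rw [dif_neg h]
    refine Finset.sum_eq_zero fun k _ => if_neg (by omega)

lemma itl_bij :
    Function.Bijective (fun p : (Fin m → ZMod 2) × (Fin m → ZMod 2) => itl p.1 p.2) := by
  rw [Fintype.bijective_iff_injective_and_card]
  constructor
  · rintro ⟨a, b⟩ ⟨a', b'⟩ h
    simp only [Prod.mk.injEq]
    constructor
    · funext i
      simpa only [itl_din] using congrFun h (din i)
    · funext i
      simpa only [itl_din'] using congrFun h (din' i)
  · simp [Fintype.card_fun, ← pow_add, two_mul]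

/-- key Walsh-sum computation for the quadratic form. -/
lemma walsh (w : Fin (2*m) → ZMod 2) :
    ∃ ε : ℤ, (ε = 1 ∨ ε = -1) ∧
      ∑ x : Fin (2*m) → ZMod 2, χ (Q x + ∑ j, w j * x j) = ε * 2^m := by
  classical
  set c : Fin m → ZMod 2 := fun i => w (din i) with hc
  set d : Fin m → ZMod 2 := fun i => w (din' i) with hd
  let dd : ℕ → ZMod 2 := fun k => if h : k < m then d ⟨k, h⟩ else 0
  let astar : Fin m → ZMod 2 := fun i => ∑ k ∈ Finset.Ico (i:ℕ) m, dd k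
  let t : (Fin m → ZMod 2) → Fin m → ZMod 2 := fun a i =>
    a i + (if h : (i:ℕ)+1 < m then a ⟨(i:ℕ)+1, h⟩ else 0) + d i
  refine ⟨χ (∑ i, c i * astar i), χ_pm _, ?_⟩
  -- step 1 : reindex the sum over x by pairs (a, b)
  rw [← Fintype.sum_bijective _ itl_bij _ _ (fun p => rfl)]
  rw [Fintype.sum_prod_type]
  -- step 2 : the exponent in interleaved coordinates
  have key : ∀ a b : Fin m → ZMod 2,
      Q (itl a b) + ∑ j, w j * itl a b j
        = (∑ i, b i * t a i) + ∑ i, c i * a i := by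
    intro a b
    rw [Q_eq, sum_pair (fun j => if h : (j:ℕ)+1 < 2*m then itl a b j * itl a b ⟨(j:ℕ)+1, h⟩ else 0),
        sum_pair (fun j => w j * itl a b j)]
    have hQ1 : ∀ i : Fin m,
        (if h : ((din i :Fin (2*m)):ℕ)+1 < 2*m then itl a b (din i) * itl a b ⟨((din i:Fin (2*m)):ℕ)+1, h⟩ else 0)
          = a i * b i := by
      intro i
      have h : (2*(i:ℕ))+1 < 2*m := by omega
      have e1 : ((din i :Fin (2*m)):ℕ) = 2*(i:ℕ) := rfl
      rw [dif_pos (by rw [e1]; exact h)]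
      have e2 : (⟨((din i:Fin (2*m)):ℕ)+1, by rw [e1]; exact h⟩ : Fin (2*m)) = din' i := by
        apply Fin.ext; simp [din, din']
      rw [itl_din, show (⟨((din i:Fin (2*m)):ℕ)+1, _⟩ : Fin (2*m)) = din' i from e2, itl_din']
    have hQ2 : ∀ i : Fin m,
        (if h : ((din' i :Fin (2*m)):ℕ)+1 < 2*m then itl a b (din' i) * itl a b ⟨((din' i:Fin (2*m)):ℕ)+1, h⟩ else 0)
          = (if h : (i:ℕ)+1 < m then b i * a ⟨(i:ℕ)+1, h⟩ else 0) := by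
      intro i
      have e1 : ((din' i :Fin (2*m)):ℕ) = 2*(i:ℕ)+1 := rfl
      by_cases h : (i:ℕ)+1 < m
      · have h2 : (2*(i:ℕ)+1)+1 < 2*m := by omega
        rw [dif_pos (by rw [e1]; exact h2), dif_pos h]
        have e2 : (⟨((din' i:Fin (2*m)):ℕ)+1, by rw [e1]; exact h2⟩ : Fin (2*m)) = din (⟨(i:ℕ)+1, h⟩ : Fin m) := by
          apply Fin.ext; simp [din, din']; omega
        rw [itl_din', show (⟨((din' i:Fin (2*m)):ℕ)+1, _⟩ : Fin (2*m)) = din (⟨(i:ℕ)+1, h⟩ : Fin m) from e2, itl_din]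
      · rw [dif_neg (by rw [e1]; omega), dif_neg h]
    calc (∑ i : Fin m, ((if h : ((din i:Fin (2*m)):ℕ)+1 < 2*m then itl a b (din i) * itl a b ⟨((din i:Fin (2*m)):ℕ)+1, h⟩ else 0)
            + (if h : ((din' i:Fin (2*m)):ℕ)+1 < 2*m then itl a b (din' i) * itl a b ⟨((din' i:Fin (2*m)):ℕ)+1, h⟩ else 0)))
          + ∑ i : Fin m, (w (din i) * itl a b (din i) + w (din' i) * itl a b (din' i))
        = ∑ i : Fin m, ((a i * b i + (if h : (i:ℕ)+1 < m then b i * a ⟨(i:ℕ)+1, h⟩ else 0))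
            + (c i * a i + d i * b i)) := by
          rw [← Finset.sum_add_distrib]
          refine Finset.sum_congr rfl fun i _ => ?_
          rw [hQ1 i, hQ2 i, itl_din, itl_din', hc, hd]
      _ = (∑ i, b i * t a i) + ∑ i, c i * a i := by
          rw [← Finset.sum_add_distrib]
          refine Finset.sum_congr rfl fun i _ => ?_
          simp only [t, mul_add, mul_ite, mul_zero]
          split_ifs <;> ring
  -- step 3 : sum over b
  have hb : ∀ a : Fin m → ZMod 2,
      ∑ b : Fin m → ZMod 2, χ (Q (itl a b) + ∑ j, w j * itl a b j)
        = (if (∀ i, t a i = 0) then (2:ℤ)^m else 0) * χ (∑ i, c i * a i) := by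
    intro a
    have h1 : ∀ b : Fin m → ZMod 2, χ (Q (itl a b) + ∑ j, w j * itl a b j)
        = (∏ i, χ (b i * t a i)) * χ (∑ i, c i * a i) := by
      intro b
      rw [key a b, χ_add, χ_sum]
    rw [Finset.sum_congr rfl fun b _ => h1 b, ← Finset.sum_mul]
    congr 1
    have h2 : ∑ b : Fin m → ZMod 2, ∏ i, χ (b i * t a i)
        = ∏ i : Fin m, ∑ β : ZMod 2, χ (β * t a i) := by
      rw [Finset.prod_univ_sum (fun _ => Finset.univ) (fun i β => χ (β * t a i))]
      rw [Fintype.piFinset_univ]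
    rw [h2]
    have h3 : ∀ s : ZMod 2, ∑ β : ZMod 2, χ (β * s) = if s = 0 then (2:ℤ) else 0 := by
      decide
    rw [Finset.prod_congr rfl fun i _ => h3 (t a i)]
    split_ifs with h
    · have h4 : ∀ i ∈ Finset.univ, (if t a i = 0 then (2:ℤ) else 0) = 2 :=
        fun i _ => if_pos (h i)
      rw [Finset.prod_congr rfl h4, Finset.prod_const]
      simp
    · push_neg at h
      obtain ⟨i, hi⟩ := h
      exact Finset.prod_eq_zero (Finset.mem_univ i) (if_neg hi)
  rw [Finset.sum_congr rfl fun a _ => hb a]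
  -- step 4 : sum over a; only astar contributes
  have hts : ∀ a : Fin m → ZMod 2, (∀ i, t a i = 0) ↔ a = astar := by
    intro a
    constructor
    · intro h
      funext i
      -- downward induction
      have aux : ∀ j : ℕ, ∀ i : Fin m, m ≤ (i:ℕ) + j + 1 → a i = astar i := by
        intro j
        induction j with
        | zero =>
          intro i hi
          have hi2 : (i:ℕ) + 1 = m := by omega
          have h0 := h i
          simp only [t] at h0
          have ht : ¬ ((i:ℕ)+1 < m) := by omega
          rw [dif_neg ht] at h0
          have ha : a i = d i := zmod2_eq_of_add _ _ (by rw [add_zero] at h0; exact h0)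
          have hstar : astar i = d i := by
            show (∑ k ∈ Finset.Ico (i:ℕ) m, dd k) = d i
            rw [Finset.sum_eq_sum_Ico_succ_bot (by omega : (i:ℕ) < m), hi2]
            simp only [Finset.Ico_self, Finset.sum_empty, add_zero]
            simp only [dd, dif_pos i.isLt, Fin.eta]
          rw [ha, hstar]
        | succ k ih =>
          intro i hi
          by_cases ht : (i:ℕ)+1 < m
          · have h0 := h i
            simp only [t] at h0
            rw [dif_pos ht] at h0
            have ha : a i = a ⟨(i:ℕ)+1, ht⟩ + d i :=
              zmod2_eq_of_add _ _ (by rw [← add_assoc]; exact h0)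
            have hsucc : a ⟨(i:ℕ)+1, ht⟩ = astar ⟨(i:ℕ)+1, ht⟩ := ih _ (by simp; omega)
            have hstar : astar i = astar ⟨(i:ℕ)+1, ht⟩ + d i := by
              show (∑ k ∈ Finset.Ico (i:ℕ) m, dd k) = (∑ k ∈ Finset.Ico ((i:ℕ)+1) m, dd k) + d i
              rw [Finset.sum_eq_sum_Ico_succ_bot (by omega : (i:ℕ) < m)]
              rw [add_comm]
              congr 1
              simp only [dd, dif_pos i.isLt, Fin.eta]
            rw [ha, hsucc, hstar]
          · -- same as base case
            have h0 := h i
            simp only [t] at h0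
            rw [dif_neg ht] at h0
            have ha : a i = d i := zmod2_eq_of_add _ _ (by rw [add_zero] at h0; exact h0)
            have hstar : astar i = d i := by
              show (∑ k ∈ Finset.Ico (i:ℕ) m, dd k) = d i
              rw [Finset.sum_eq_sum_Ico_succ_bot (by omega : (i:ℕ) < m)]
              rw [show (i:ℕ)+1 = m by omega]
              simp only [Finset.Ico_self, Finset.sum_empty, add_zero]
              simp only [dd, dif_pos i.isLt, Fin.eta]
            rw [ha, hstar]
      exact aux m i (by omega)
    · rintro rfl
      intro i
      simp only [t]
      by_cases ht : (i:ℕ)+1 < m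
      · rw [dif_pos ht]
        have hstar : astar i = astar ⟨(i:ℕ)+1, ht⟩ + d i := by
          show (∑ k ∈ Finset.Ico (i:ℕ) m, dd k) = (∑ k ∈ Finset.Ico ((i:ℕ)+1) m, dd k) + d i
          rw [Finset.sum_eq_sum_Ico_succ_bot (by omega : (i:ℕ) < m), add_comm]
          congr 1
          simp only [dd, dif_pos i.isLt, Fin.eta]
        rw [hstar]
        exact zmod2_l4 _ _
      · rw [dif_neg ht]
        have hstar : astar i = d i := by
          show (∑ k ∈ Finset.Ico (i:ℕ) m, dd k) = d i
          rw [Finset.sum_eq_sum_Ico_succ_bot (by omega : (i:ℕ) < m)]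
          rw [show (i:ℕ)+1 = m by omega]
          simp only [Finset.Ico_self, Finset.sum_empty, add_zero]
          simp only [dd, dif_pos i.isLt, Fin.eta]
        rw [hstar]
        exact zmod2_l2 _
  calc ∑ a : Fin m → ZMod 2, (if (∀ i, t a i = 0) then (2:ℤ)^m else 0) * χ (∑ i, c i * a i)
      = ∑ a : Fin m → ZMod 2, (if a = astar then (2:ℤ)^m * χ (∑ i, c i * a i) else 0) := by
        refine Finset.sum_congr rfl fun a _ => ?_
        by_cases h : a = astar
        · rw [if_pos ((hts a).2 h), if_pos h]
        · rw [if_neg (fun hh => h ((hts a).1 hh)), if_neg h, zero_mul]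
    _ = χ (∑ i, c i * astar i) * 2^m := by
        rw [Finset.sum_ite_eq']
        simp [mul_comm]


lemma count_char {α : Type*} [Fintype α] (h : α → ZMod 2) :
    ∑ x : α, χ (h x) = (Fintype.card α : ℤ)
      - 2 * (Finset.univ.filter fun x => h x = 1).card := by
  have e : ∀ a : ZMod 2, χ a = 1 - 2 * (if a = 1 then 1 else 0) := by decide
  have hfc : (((Finset.univ.filter fun x => h x = 1).card : ℕ) : ℤ)
      = ∑ x : α, if h x = 1 then 1 else 0 := by
    rw [Finset.card_filter]
    push_cast
    rfl
  rw [hfc, Finset.sum_congr rfl fun x _ => e (h x), Finset.sum_sub_distrib, Finset.sum_const,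
    ← Finset.mul_sum]
  simp [Finset.card_univ]

lemma dist_eq (m : ℕ) (c' : (Fin (2*m) → ZMod 2) → ZMod 2)
    (hc' : ∀ y, c' y = Q y + ∑ j, y j) (u : Fin (2*m) → ZMod 2) :
    ∃ ε : ℤ, (ε = 1 ∨ ε = -1) ∧ ∀ v : ZMod 2,
      2 * (hammingDist (fun x => (∑ i, u i * x i) + v) c' : ℤ)
        = 2^(2*m) - χ v * ε * 2^m := by
  classical
  obtain ⟨ε, hε, hsum⟩ := walsh (fun j => u j + 1)
  refine ⟨ε, hε, fun v => ?_⟩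
  have hexp : ∀ x : Fin (2*m) → ZMod 2,
      c' x + ((∑ i, u i * x i) + v) = (Q x + ∑ j, (u j + 1) * x j) + v := by
    intro x
    rw [hc' x]
    have h1 : ∑ j, (u j + 1) * x j = (∑ j, u j * x j) + ∑ j, x j := by
      rw [← Finset.sum_add_distrib]
      exact Finset.sum_congr rfl fun j _ => by ring
    rw [h1]; ring
  have hd : (hammingDist (fun x => (∑ i, u i * x i) + v) c' : ℕ)
      = (Finset.univ.filter fun x : Fin (2*m) → ZMod 2 =>
          (Q x + ∑ j, (u j + 1) * x j) + v = 1).card := by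
    show (Finset.univ.filter fun x : Fin (2*m) → ZMod 2 =>
        (fun y => (∑ i, u i * y i) + v) x ≠ c' x).card = _
    congr 1
    apply Finset.filter_congr
    intro x _
    have h2 : ∀ p q : ZMod 2, (p ≠ q) ↔ (q + p = 1) := by decide
    rw [h2]
    rw [hexp x]
  have hS : ∑ x : Fin (2*m) → ZMod 2, χ ((Q x + ∑ j, (u j + 1) * x j) + v)
      = χ v * ε * 2^m := by
    have h3 : ∀ x : Fin (2*m) → ZMod 2,
        χ ((Q x + ∑ j, (u j + 1) * x j) + v)
          = χ v * χ (Q x + ∑ j, (u j + 1) * x j) := by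
      intro x; rw [χ_add, mul_comm]
    rw [Finset.sum_congr rfl fun x _ => h3 x, ← Finset.mul_sum, hsum]
    ring
  have hcc := count_char (fun x : Fin (2*m) → ZMod 2 => (Q x + ∑ j, (u j + 1) * x j) + v)
  rw [hS] at hcc
  have hcard : (Fintype.card (Fin (2*m) → ZMod 2) : ℤ) = 2^(2*m) := by
    simp [Fintype.card_fun]
  rw [hcard] at hcc
  rw [hd]
  linarith

lemma main (m : ℕ) (hm : 1 ≤ m) (c' : (Fin (2*m) → ZMod 2) → ZMod 2)
    (hc' : ∀ y, c' y =
      (∑ j : Fin (2*m), ∑ k : Fin (2*m),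
        if (j : ℕ) + 1 = (k : ℕ) then y j * y k else 0) + ∑ j, y j) :
    nlAffine c' = 2^(2*m-1) - 2^(m-1) := by
  classical
  have hc'' : ∀ y, c' y = Q y + ∑ j, y j := hc'
  have hle : (2:ℕ)^(m-1) ≤ 2^(2*m-1) := Nat.pow_le_pow_right (by norm_num) (by omega)
  have hcastN : ((2^(2*m-1) - 2^(m-1) : ℕ) : ℤ) = 2^(2*m-1) - 2^(m-1) := by
    push_cast [Nat.cast_sub hle]; ring
  have hpow : (2:ℤ) * 2^(2*m-1) = 2^(2*m) := by
    rw [← pow_succ']; congr 1; omega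
  have hpow2 : (2:ℤ) * 2^(m-1) = 2^m := by
    rw [← pow_succ']; congr 1; omega
  unfold nlAffine
  apply le_antisymm
  · obtain ⟨ε, hε, hv⟩ := dist_eq m c' hc'' (fun _ => 0)
    set v : ZMod 2 := if ε = 1 then 0 else 1 with hvdef
    have hχ : χ v * ε = 1 := by
      rcases hε with h | h <;> simp [hvdef, h, χ]
    apply Nat.sInf_le
    refine ⟨fun _ => 0, v, ?_⟩
    have h2 := hv v
    rw [hχ, one_mul] at h2
    have hD : ((2^(2*m-1) - 2^(m-1) : ℕ) : ℤ)
        = (hammingDist (fun x => (∑ i, (fun _ => (0: ZMod 2)) i * x i) + v) c' : ℤ) := by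
      rw [hcastN]; linarith
    exact_mod_cast hD
  · have hne : {k | ∃ (u : Fin (2*m) → ZMod 2) (v : ZMod 2),
        k = hammingDist (fun x => (∑ i, u i * x i) + v) c'}.Nonempty :=
      ⟨_, fun _ => 0, 0, rfl⟩
    obtain ⟨u, v, hk⟩ := Nat.sInf_mem hne
    rw [hk]
    obtain ⟨ε, hε, hv⟩ := dist_eq m c' hc'' u
    have h2 := hv v
    have hle1 : χ v * ε ≤ 1 := by
      rcases χ_pm v with h | h <;> rcases hε with h' | h' <;> simp [h, h']
    have hmpos : (0:ℤ) < 2^m := by positivity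
    have hD : ((2^(2*m-1) - 2^(m-1) : ℕ) : ℤ)
        ≤ (hammingDist (fun x => (∑ i, u i * x i) + v) c' : ℤ) := by
      rw [hcastN]
      nlinarith
    exact_mod_cast hD

end Stmt17aux

/-- For the `n`-player parity game on the GHZ state with query set
`X^{⊗n}·⟨Z_1Z_2,…,Z_{n−1}Z_n⟩` and `n` odd, the classical value
`1 − nl_1(c')/2^{n−1}` equals `1/2 + 2^{−(n+1)/2}`; equivalently, the
first-order nonlinearity of the quadratic Boolean function
`c'(y) = Σ_j y_j y_{j+1} + Σ_j y_j` in `n−1` variables equals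
`2^{n−2} − 2^{(n−3)/2}`. -/
theorem stmt17 (n : ℕ) (hn : 3 ≤ n) (hodd : Odd n)
    (c' : (Fin (n - 1) → ZMod 2) → ZMod 2)
    (hc' : ∀ y, c' y =
      (∑ j : Fin (n - 1), ∑ k : Fin (n - 1),
        if (j : ℕ) + 1 = (k : ℕ) then y j * y k else 0) + ∑ j, y j) :
    nlAffine c' = 2 ^ (n - 2) - 2 ^ ((n - 3) / 2) ∧
    (1 : ℝ) - (nlAffine c' : ℝ) / 2 ^ (n - 1) = 1 / 2 + (1 / 2 : ℝ) ^ ((n + 1) / 2) := by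
  obtain ⟨k, hk⟩ := hodd
  subst hk
  have hk1 : 1 ≤ k := by omega
  have hmain := Stmt17aux.main k hk1 c' hc'
  have hA : nlAffine c' = 2 ^ (2*k+1 - 2) - 2 ^ ((2*k+1 - 3) / 2) := by
    rw [show 2*k+1-2 = 2*k-1 from by omega, show (2*k+1-3)/2 = k-1 from by omega]
    exact hmain
  refine ⟨hA, ?_⟩
  rw [hA]
  obtain ⟨t, rfl⟩ : ∃ t, k = t + 1 := ⟨k - 1, by omega⟩
  rw [show 2*(t+1)+1-2 = 2*t+1 from by omega,
      show (2*(t+1)+1-3)/2 = t from by omega,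
      show 2*(t+1)+1-1 = 2*t+2 from by omega,
      show (2*(t+1)+1+1)/2 = t+2 from by omega]
  rw [Nat.cast_sub (Nat.pow_le_pow_right (by norm_num) (by omega))]
  push_cast
  rw [one_div_pow]
  have h2 : (2:ℝ)^(2*t+2) ≠ 0 := by positivity
  field_simp
  ring
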